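/- Let (H,R) be quasitriangular, A a quasi-commutative left H-module algebra, and V, W quasi-commutative left H-module A-bimodules (v·a = (R̄^α▷a)·(R̄_α▷v)). Then the Hom-module Hom_A(V,W) of right A-linear maps is itself a quasi-commutative left H-module A-bimodule: for all a ∈ A and P ∈ Hom_A(V,W), P·a = (R̄^α▷a)·(R̄_α ▶ P), where P·a = P∘l_a, a·P = l_a∘P and ▶ is the adjoint action. -/

import Mathlib

open TensorProduct

noncomputable section

variable (K : Type*) [CommRing K] (H : Type*) [Ring H] [HopfAlgebra K H]

namespace TwistPaper

def muH : H ⊗[K] H →ₗ[K] H := LinearMap.mul' K H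
def ΔH : H →ₗ[K] H ⊗[K] H := Coalgebra.comul
def εH : H →ₗ[K] K := Coalgebra.counit
def SH : H →ₗ[K] H := HopfAlgebra.antipode (R := K)

/-- `x ⊗ y ↦ x ⊗ (y ⊗ 1)`, i.e. `R ↦ R₁₂`. -/
def ins3 : H ⊗[K] H →ₗ[K] H ⊗[K] (H ⊗[K] H) :=
  LinearMap.lTensor H ((TensorProduct.mk K H H).flip 1)
/-- `R ↦ R₂₃ = 1 ⊗ R`. -/
def ins1 : H ⊗[K] H →ₗ[K] H ⊗[K] (H ⊗[K] H) :=
  TensorProduct.mk K H (H ⊗[K] H) 1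
/-- `x ⊗ y ↦ x ⊗ (1 ⊗ y)`, i.e. `R ↦ R₁₃`. -/
def ins2 : H ⊗[K] H →ₗ[K] H ⊗[K] (H ⊗[K] H) :=
  LinearMap.lTensor H (TensorProduct.mk K H H 1)
def comulLeft : H ⊗[K] H →ₗ[K] H ⊗[K] (H ⊗[K] H) :=
  (TensorProduct.assoc K H H H).toLinearMap ∘ₗ (ΔH K H).rTensor H
def comulRight : H ⊗[K] H →ₗ[K] H ⊗[K] (H ⊗[K] H) :=
  (ΔH K H).lTensor H

/-- `(H, R)` is quasitriangular: `R` is invertible, `Δ^cop(ξ) = R Δ(ξ) R⁻¹`,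
`(Δ⊗id)R = R₁₃R₂₃` and `(id⊗Δ)R = R₁₃R₁₂`. -/
structure IsQuasitriangular (Rm Rinv : H ⊗[K] H) : Prop where
  mul_inv : Rm * Rinv = 1
  inv_mul : Rinv * Rm = 1
  quasi_cocomm : ∀ ξ : H, TensorProduct.comm K H H (ΔH K H ξ) = Rm * ΔH K H ξ * Rinv
  hexagon1 : comulLeft K H Rm = ins2 K H Rm * ins1 K H Rm
  hexagon2 : comulRight K H Rm = ins2 K H Rm * ins3 K H Rm

/-- `sw x f g c v w = Σ c (f x¹ v) (g x² w)` for `x = Σ x¹ ⊗ x²`. -/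
def sw {V W V' W' Z : Type*}
    [AddCommGroup V] [Module K V] [AddCommGroup W] [Module K W]
    [AddCommGroup V'] [Module K V'] [AddCommGroup W'] [Module K W']
    [AddCommGroup Z] [Module K Z]
    (x : H ⊗[K] H) (f : H →ₗ[K] V →ₗ[K] V') (g : H →ₗ[K] W →ₗ[K] W')
    (c : V' →ₗ[K] W' →ₗ[K] Z) : V →ₗ[K] W →ₗ[K] Z :=
  ((TensorProduct.mapBilinear (RingHom.id K) H H V' W').compr₂
      (TensorProduct.lift c ∘ₗ LinearMap.applyₗ (R := K) x)).compl₁₂ f.flip g.flip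

/-- `ρ` is a left `H`-module structure. -/
def IsHAction {V : Type*} [AddCommGroup V] [Module K V] (ρ : H →ₗ[K] V →ₗ[K] V) : Prop :=
  (∀ ξ ζ : H, ∀ v : V, ρ (ξ * ζ) v = ρ ξ (ρ ζ v)) ∧ (∀ v : V, ρ 1 v = v)

/-- `(A, m, ρ)` is a left `H`-module algebra. -/
def IsModuleAlgebra {A : Type*} [AddCommGroup A] [Module K A]
    (m : A →ₗ[K] A →ₗ[K] A) (ρ : H →ₗ[K] A →ₗ[K] A) : Prop :=
  IsHAction K H ρ ∧ ∀ (ξ : H) (a b : A), ρ ξ (m a b) = sw K H (ΔH K H ξ) ρ ρ m a b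

/-- `conjEnd f g (η ⊗ ζ) P = f η ∘ₗ P ∘ₗ g ζ` on `Hom_K(V,W)`. -/
def conjEnd {V W : Type*} [AddCommGroup V] [Module K V] [AddCommGroup W] [Module K W]
    (f : H →ₗ[K] W →ₗ[K] W) (g : H →ₗ[K] V →ₗ[K] V) :
    H ⊗[K] H →ₗ[K] (V →ₗ[K] W) →ₗ[K] (V →ₗ[K] W) :=
  TensorProduct.lift
    ((LinearMap.llcomp K (V →ₗ[K] W) (V →ₗ[K] W) (V →ₗ[K] W) ∘ₗ
        (LinearMap.llcomp K V W W ∘ₗ f)).compl₂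
      ((LinearMap.llcomp K V V W).flip ∘ₗ g))

/-- The `H`-adjoint action `ξ ▶ P = (ξ₁ ▷) ∘ P ∘ (S(ξ₂) ▷)` on `Hom_K(V,W)`. -/
def adjHom {V W : Type*} [AddCommGroup V] [Module K V] [AddCommGroup W] [Module K W]
    (ρW : H →ₗ[K] W →ₗ[K] W) (ρV : H →ₗ[K] V →ₗ[K] V) :
    H →ₗ[K] (V →ₗ[K] W) →ₗ[K] (V →ₗ[K] W) :=
  conjEnd K H ρW (ρV ∘ₗ SH K H) ∘ₗ ΔH K H

/-- The tensor product action `ξ ▷ (v ⊗ w) = (ξ₁ ▷ v) ⊗ (ξ₂ ▷ w)`. -/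
def tensAct {V W : Type*} [AddCommGroup V] [Module K V] [AddCommGroup W] [Module K W]
    (ρV : H →ₗ[K] V →ₗ[K] V) (ρW : H →ₗ[K] W →ₗ[K] W) :
    H →ₗ[K] (V ⊗[K] W) →ₗ[K] (V ⊗[K] W) :=
  (TensorProduct.homTensorHomMap (RingHom.id K) V W V W ∘ₗ TensorProduct.map ρV ρW) ∘ₗ ΔH K H

/-- The `R`-tensor product of `K`-linear maps,
`P ⊗_R Q = (P ∘ (R̄^α ▷)) ⊗ (R̄_α ▶ Q)`, as a bilinear map in `(P,Q)`. -/
def otimesR {V W V' W' : Type*}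
    [AddCommGroup V] [Module K V] [AddCommGroup W] [Module K W]
    [AddCommGroup V'] [Module K V'] [AddCommGroup W'] [Module K W']
    (Rinv : H ⊗[K] H)
    (ρV : H →ₗ[K] V →ₗ[K] V) (ρW : H →ₗ[K] W →ₗ[K] W) (ρW' : H →ₗ[K] W' →ₗ[K] W') :
    (V →ₗ[K] V') →ₗ[K] (W →ₗ[K] W') →ₗ[K] (V ⊗[K] W →ₗ[K] V' ⊗[K] W') :=
  ((TensorProduct.mapBilinear (RingHom.id K) H H (V →ₗ[K] V') (W →ₗ[K] W')).compr₂
      (TensorProduct.homTensorHomMap (RingHom.id K) V W V' W' ∘ₗ LinearMap.applyₗ (R := K) Rinv)).compl₁₂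
    (((LinearMap.llcomp K H (V →ₗ[K] V) (V →ₗ[K] V')).flip ρV) ∘ₗ LinearMap.llcomp K V V V')
    ((adjHom K H ρW' ρW).flip)

/-!
Reading the quasi-commutativity of `V` backwards (`R̄ R = 1`) gives `a·v = (R_α ▷ v)·(R^α ▷ a)`.
Applying the right `A`-linear map `P` and then the quasi-commutativity of `W` yields
`P(a·v) = (R̄^β R^α ▷ a)·(R̄_β ▷ P(R_α ▷ v))`, the image of `R̄₁₂ R₁₃` under
`ξ ⊗ η ⊗ ζ ↦ (ξ ▷ a)·(η ▷ P(ζ ▷ v))`. The right-hand side `(R̄^α ▷ a)·(R̄_α ▶ P)(v)` is the image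
of `(id ⊗ (id ⊗ S)Δ) R̄`, and `(id ⊗ Δ) R̄ = R̄₁₂ R̄₁₃` (the inverse of the second hexagon axiom)
together with `(id ⊗ S) R̄ = R` turns this into `R̄₁₂ R₁₃` as well.
-/

def counitRight : H ⊗[K] H →ₐ[K] H :=
  (Algebra.TensorProduct.rid K K H).toAlgHom.comp
    (Algebra.TensorProduct.map (AlgHom.id K H) (Bialgebra.counitAlgHom K H))

section Quasitriangular

variable {K H}

@[simp]
lemma counitRight_tmul (x y : H) : counitRight K H (x ⊗ₜ y) = εH K H y • x := rfl

lemma counitRight_comul (ξ : H) : counitRight K H (ΔH K H ξ) = ξ := by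
  have : (counitRight K H).toLinearMap =
      (TensorProduct.rid K H).toLinearMap ∘ₗ (εH K H).lTensor H :=
    TensorProduct.ext' fun _ _ => rfl
  simpa [ΔH, εH, Coalgebra.lTensor_counit_comul] using LinearMap.congr_fun this (ΔH K H ξ)

lemma ins2_eq_algHom : ins2 K H =
    (Algebra.TensorProduct.map (AlgHom.id K H) Algebra.TensorProduct.includeRight).toLinearMap :=
  TensorProduct.ext' fun _ _ => rfl

lemma ins3_eq_algHom : ins3 K H =
    (Algebra.TensorProduct.map (AlgHom.id K H) Algebra.TensorProduct.includeLeft).toLinearMap :=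
  TensorProduct.ext' fun _ _ => rfl

lemma comulRight_eq_algHom : comulRight K H =
    (Algebra.TensorProduct.map (AlgHom.id K H) (Bialgebra.comulAlgHom K H)).toLinearMap :=
  TensorProduct.ext' fun _ _ => rfl

lemma ins3_tmul_mul_ins2_tmul (a b c d : H) :
    ins3 K H (a ⊗ₜ b) * ins2 K H (c ⊗ₜ d) = (a * c) ⊗ₜ (b ⊗ₜ d) := by
  simp [ins2, ins3, Algebra.TensorProduct.tmul_mul_tmul]

lemma lTensor_lTensor_ins3_mul_ins2 (f : H →ₗ[K] H) (x y : H ⊗[K] H) :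
    (f.lTensor H).lTensor H (ins3 K H x * ins2 K H y) = ins3 K H x * ins2 K H (f.lTensor H y) := by
  induction x using TensorProduct.induction_on with
  | zero => simp
  | add x₁ x₂ h₁ h₂ => simp only [map_add, add_mul, h₁, h₂]
  | tmul a b =>
    induction y using TensorProduct.induction_on with
    | zero => simp
    | add y₁ y₂ h₁ h₂ => simp only [map_add, mul_add, h₁, h₂]
    | tmul c d => simp only [ins3_tmul_mul_ins2_tmul, LinearMap.lTensor_tmul]

lemma lTensor_mul'_ins3_mul_ins2 (x y : H ⊗[K] H) :
    (LinearMap.mul' K H).lTensor H (ins3 K H x * ins2 K H y) = x * y := by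
  induction x using TensorProduct.induction_on with
  | zero => simp
  | add x₁ x₂ h₁ h₂ => simp only [map_add, add_mul, h₁, h₂]
  | tmul a b =>
    induction y using TensorProduct.induction_on with
    | zero => simp
    | add y₁ y₂ h₁ h₂ => simp only [map_add, mul_add, h₁, h₂]
    | tmul c d =>
      simp [ins3_tmul_mul_ins2_tmul, Algebra.TensorProduct.tmul_mul_tmul]

lemma lTensor_unit_counit_apply (x : H ⊗[K] H) :
    (Algebra.linearMap K H ∘ₗ εH K H).lTensor H x
      = (Algebra.TensorProduct.includeLeft : H →ₐ[K] H ⊗[K] H) (counitRight K H x) := by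
  induction x using TensorProduct.induction_on with
  | zero => simp
  | add x₁ x₂ h₁ h₂ => simp only [map_add, h₁, h₂]
  | tmul a b => simp [Algebra.algebraMap_eq_smul_one]

namespace IsQuasitriangular

variable {Rm Rinv : H ⊗[K] H} (hR : IsQuasitriangular K H Rm Rinv)
include hR

lemma counitRight_Rm : counitRight K H Rm = 1 := by
  let κ := Algebra.TensorProduct.map (AlgHom.id K H) (counitRight K H)
  have hΔ : ∀ x, κ (comulRight K H x) = x := by
    intro x
    induction x using TensorProduct.induction_on with
    | zero => simp
    | add x₁ x₂ h₁ h₂ => simp only [map_add, h₁, h₂]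
    | tmul a b => simp [κ, comulRight, counitRight_comul]
  have h₁₂ : ∀ x, κ (ins3 K H x) = x := by
    intro x
    induction x using TensorProduct.induction_on with
    | zero => simp
    | add x₁ x₂ h₁ h₂ => simp only [map_add, h₁, h₂]
    | tmul a b => simp [κ, ins3, εH]
  have h₁₃ : ∀ x, κ (ins2 K H x) =
      (Algebra.TensorProduct.includeLeft : H →ₐ[K] H ⊗[K] H) (counitRight K H x) := by
    intro x
    induction x using TensorProduct.induction_on with
    | zero => simp
    | add x₁ x₂ h₁ h₂ => simp only [map_add, h₁, h₂]
    | tmul a b => simp [κ, ins2]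
  -- `id ⊗ id ⊗ ε` turns `(id ⊗ Δ) R = R₁₃ R₁₂` into `R = ((id ⊗ ε) R ⊗ 1) R`
  have hRm := congrArg κ hR.hexagon2
  rw [map_mul, hΔ, h₁₃, h₁₂] at hRm
  have hincl : (Algebra.TensorProduct.includeLeft : H →ₐ[K] H ⊗[K] H) (counitRight K H Rm) = 1 :=
    calc _ = Algebra.TensorProduct.includeLeft (counitRight K H Rm) * (Rm * Rinv) := by
          rw [hR.mul_inv, mul_one]
      _ = 1 := by rw [← mul_assoc, ← hRm, hR.mul_inv]
  simpa [εH] using congrArg (counitRight K H) hincl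

lemma counitRight_Rinv : counitRight K H Rinv = 1 := by
  simpa [hR.counitRight_Rm] using congrArg (counitRight K H) hR.mul_inv

lemma comulRight_Rinv : comulRight K H Rinv = ins3 K H Rinv * ins2 K H Rinv := by
  refine left_inv_eq_right_inv (a := comulRight K H Rm) ?_ ?_
  · rw [comulRight_eq_algHom, AlgHom.toLinearMap_apply, AlgHom.toLinearMap_apply, ← map_mul,
      hR.inv_mul, map_one]
  · have h₂ : ins2 K H Rm * ins2 K H Rinv = 1 := by
      rw [ins2_eq_algHom, AlgHom.toLinearMap_apply, AlgHom.toLinearMap_apply, ← map_mul,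
        hR.mul_inv, map_one]
    have h₃ : ins3 K H Rm * ins3 K H Rinv = 1 := by
      rw [ins3_eq_algHom, AlgHom.toLinearMap_apply, AlgHom.toLinearMap_apply, ← map_mul,
        hR.mul_inv, map_one]
    rw [hR.hexagon2, mul_assoc, ← mul_assoc (ins3 K H Rm), h₃, one_mul, h₂]

lemma lTensor_antipode_Rinv : (SH K H).lTensor H Rinv = Rm := by
  have hcancel : Rinv * (SH K H).lTensor H Rinv = 1 := by
    rw [← lTensor_mul'_ins3_mul_ins2, ← lTensor_lTensor_ins3_mul_ins2, ← hR.comulRight_Rinv,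
      comulRight, ← LinearMap.comp_apply, ← LinearMap.lTensor_comp, ← LinearMap.comp_apply,
      ← LinearMap.lTensor_comp, LinearMap.comp_assoc, SH, ΔH,
      HopfAlgebra.mul_antipode_lTensor_comul, ← εH, lTensor_unit_counit_apply, hR.counitRight_Rinv,
      map_one]
  calc (SH K H).lTensor H Rinv = (Rm * Rinv) * (SH K H).lTensor H Rinv := by
        rw [hR.mul_inv, one_mul]
    _ = Rm := by rw [mul_assoc, hcancel, mul_one]

lemma lTensor_antipode_comul_Rinv :
    ((SH K H).lTensor H ∘ₗ ΔH K H).lTensor H Rinv = ins3 K H Rinv * ins2 K H Rm := by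
  rw [LinearMap.lTensor_comp, LinearMap.comp_apply, ← comulRight, hR.comulRight_Rinv,
    lTensor_lTensor_ins3_mul_ins2, hR.lTensor_antipode_Rinv]

end IsQuasitriangular

end Quasitriangular

section Sw

variable {K H} {V₀ W₀ V₁ W₁ Z₀ Z₁ : Type*}
    [AddCommGroup V₀] [Module K V₀] [AddCommGroup W₀] [Module K W₀]
    [AddCommGroup V₁] [Module K V₁] [AddCommGroup W₁] [Module K W₁]
    [AddCommGroup Z₀] [Module K Z₀] [AddCommGroup Z₁] [Module K Z₁]

lemma sw_apply (x : H ⊗[K] H) (f : H →ₗ[K] V₀ →ₗ[K] V₁) (g : H →ₗ[K] W₀ →ₗ[K] W₁)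
    (c : V₁ →ₗ[K] W₁ →ₗ[K] Z₀) (u : V₀) (w : W₀) :
    sw K H x f g c u w = TensorProduct.lift c (TensorProduct.map (f.flip u) (g.flip w) x) := rfl

@[simp]
lemma sw_tmul (ξ η : H) (f : H →ₗ[K] V₀ →ₗ[K] V₁) (g : H →ₗ[K] W₀ →ₗ[K] W₁)
    (c : V₁ →ₗ[K] W₁ →ₗ[K] Z₀) (u : V₀) (w : W₀) :
    sw K H (ξ ⊗ₜ η) f g c u w = c (f ξ u) (g η w) := rfl

@[simp]
lemma sw_zero (f : H →ₗ[K] V₀ →ₗ[K] V₁) (g : H →ₗ[K] W₀ →ₗ[K] W₁)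
    (c : V₁ →ₗ[K] W₁ →ₗ[K] Z₀) (u : V₀) (w : W₀) :
    sw K H 0 f g c u w = 0 := by
  rw [sw_apply, map_zero, map_zero]

lemma sw_add (x y : H ⊗[K] H) (f : H →ₗ[K] V₀ →ₗ[K] V₁) (g : H →ₗ[K] W₀ →ₗ[K] W₁)
    (c : V₁ →ₗ[K] W₁ →ₗ[K] Z₀) (u : V₀) (w : W₀) :
    sw K H (x + y) f g c u w = sw K H x f g c u w + sw K H y f g c u w := by
  rw [sw_apply, sw_apply, sw_apply, map_add, map_add]

lemma apply_sw (x : H ⊗[K] H) (f : H →ₗ[K] V₀ →ₗ[K] V₁) (g : H →ₗ[K] W₀ →ₗ[K] W₁)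
    (c : V₁ →ₗ[K] W₁ →ₗ[K] Z₀) (Q : Z₀ →ₗ[K] Z₁) (u : V₀) (w : W₀) :
    Q (sw K H x f g c u w) = sw K H x f g (c.compr₂ Q) u w := by
  rw [sw_apply, sw_apply, TensorProduct.lift_compr₂, LinearMap.comp_apply]

lemma sw_mul {f : H →ₗ[K] V₀ →ₗ[K] V₀} {g : H →ₗ[K] W₀ →ₗ[K] W₀}
    (hf : ∀ (ξ ζ : H) (u : V₀), f (ξ * ζ) u = f ξ (f ζ u))
    (hg : ∀ (ξ ζ : H) (w : W₀), g (ξ * ζ) w = g ξ (g ζ w))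
    (x y : H ⊗[K] H) (c : V₀ →ₗ[K] W₀ →ₗ[K] Z₀) (u : V₀) (w : W₀) :
    sw K H (x * y) f g c u w = sw K H y f g (sw K H x f g c) u w := by
  induction y using TensorProduct.induction_on with
  | zero => simp
  | add y₁ y₂ h₁ h₂ => rw [mul_add, sw_add, h₁, h₂, sw_add]
  | tmul ξ' η' =>
    induction x using TensorProduct.induction_on with
    | zero => simp
    | add x₁ x₂ h₁ h₂ => rw [add_mul, sw_add, h₁, h₂, sw_tmul, sw_tmul, sw_tmul, sw_add]
    | tmul ξ η => rw [Algebra.TensorProduct.tmul_mul_tmul, sw_tmul, sw_tmul, sw_tmul, hf, hg]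

lemma sw_one {f : H →ₗ[K] V₀ →ₗ[K] V₀} {g : H →ₗ[K] W₀ →ₗ[K] W₀}
    (hf : ∀ u : V₀, f 1 u = u) (hg : ∀ w : W₀, g 1 w = w)
    (c : V₀ →ₗ[K] W₀ →ₗ[K] Z₀) (u : V₀) (w : W₀) :
    sw K H 1 f g c u w = c u w := by
  rw [Algebra.TensorProduct.one_def, sw_tmul, hf, hg]

lemma sw_sw_of_mul_eq_one {f : H →ₗ[K] V₀ →ₗ[K] V₀} {g : H →ₗ[K] W₀ →ₗ[K] W₀}
    (hf : IsHAction K H f) (hg : IsHAction K H g) {x y : H ⊗[K] H} (hxy : x * y = 1)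
    (c : V₀ →ₗ[K] W₀ →ₗ[K] Z₀) (u : V₀) (w : W₀) :
    sw K H y f g (sw K H x f g c) u w = c u w := by
  rw [← sw_mul hf.1 hg.1, hxy, sw_one hf.2 hg.2]

end Sw

variable {A V W : Type*} [AddCommGroup A] [Module K A]
    [AddCommGroup V] [Module K V] [AddCommGroup W] [Module K W]

section HomEval

variable {K H}

def homEval (ρA : H →ₗ[K] A →ₗ[K] A) (ρV : H →ₗ[K] V →ₗ[K] V) (ρW : H →ₗ[K] W →ₗ[K] W)
    (lW : A →ₗ[K] W →ₗ[K] W) (a : A) (P : V →ₗ[K] W) (v : V) :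
    H ⊗[K] (H ⊗[K] H) →ₗ[K] W :=
  TensorProduct.lift
    (lW.compl₁₂ (ρA.flip a) (LinearMap.applyₗ v ∘ₗ (conjEnd K H ρW ρV).flip P))

variable (ρA : H →ₗ[K] A →ₗ[K] A) (ρV : H →ₗ[K] V →ₗ[K] V) (ρW : H →ₗ[K] W →ₗ[K] W)
    (lW : A →ₗ[K] W →ₗ[K] W) (a : A) (P : V →ₗ[K] W) (v : V)

lemma homEval_tmul (ξ η ζ : H) :
    homEval ρA ρV ρW lW a P v (ξ ⊗ₜ (η ⊗ₜ ζ)) = lW (ρA ξ a) (ρW η (P (ρV ζ v))) := rfl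

lemma conjEnd_comp_right (g : H →ₗ[K] V →ₗ[K] V) (φ : H →ₗ[K] H) :
    conjEnd K H ρW (g ∘ₗ φ) = conjEnd K H ρW g ∘ₗ φ.lTensor H :=
  TensorProduct.ext' fun _ _ => rfl

lemma sw_sw_compl₂_eq_homEval (hA : ∀ (ξ ζ : H) (b : A), ρA (ξ * ζ) b = ρA ξ (ρA ζ b))
    (x y : H ⊗[K] H) :
    sw K H y ρA ρV ((sw K H x ρA ρW lW).compl₂ P) a v
      = homEval ρA ρV ρW lW a P v (ins3 K H x * ins2 K H y) := by
  induction y using TensorProduct.induction_on with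
  | zero => simp
  | add y₁ y₂ h₁ h₂ => rw [sw_add, h₁, h₂, map_add, mul_add, map_add]
  | tmul ξ' η' =>
    rw [sw_tmul, LinearMap.compl₂_apply]
    induction x using TensorProduct.induction_on with
    | zero => simp
    | add x₁ x₂ h₁ h₂ => rw [sw_add, h₁, h₂, map_add, add_mul, map_add]
    | tmul ξ η => rw [ins3_tmul_mul_ins2_tmul, homEval_tmul, hA, sw_tmul]

lemma sw_adjHom_eq_homEval (x : H ⊗[K] H) :
    sw K H x ρA (adjHom K H ρW ρV) (LinearMap.llcomp K V W W ∘ₗ lW) a P v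
      = homEval ρA ρV ρW lW a P v (((SH K H).lTensor H ∘ₗ ΔH K H).lTensor H x) := by
  induction x using TensorProduct.induction_on with
  | zero => simp
  | add x₁ x₂ h₁ h₂ => rw [sw_add, LinearMap.add_apply, h₁, h₂, map_add, map_add]
  | tmul ξ η =>
    rw [sw_tmul, adjHom, conjEnd_comp_right]
    rfl

lemma apply_lmul_eq_homEval {Rm Rinv : H ⊗[K] H} (hRR : Rinv * Rm = 1)
    (hA : IsHAction K H ρA) (hV : IsHAction K H ρV) (lV rV : A →ₗ[K] V →ₗ[K] V)
    (rW : A →ₗ[K] W →ₗ[K] W)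
    (hqcV : ∀ (b : A) (u : V), rV b u = sw K H Rinv ρA ρV lV b u)
    (hqcW : ∀ (b : A) (w : W), rW b w = sw K H Rinv ρA ρW lW b w)
    (hP : ∀ (b : A) (u : V), P (rV b u) = rW b (P u)) :
    P (lV a v) = homEval ρA ρV ρW lW a P v (ins3 K H Rinv * ins2 K H Rm) := by
  have hrV : rV = sw K H Rinv ρA ρV lV := LinearMap.ext₂ hqcV
  have hPr : rV.compr₂ P = (sw K H Rinv ρA ρW lW).compl₂ P :=
    LinearMap.ext₂ fun b u => by rw [LinearMap.compr₂_apply, hP, hqcW, LinearMap.compl₂_apply]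
  calc P (lV a v) = P (sw K H Rm ρA ρV rV a v) := by rw [hrV, sw_sw_of_mul_eq_one hA hV hRR]
    _ = sw K H Rm ρA ρV (rV.compr₂ P) a v := apply_sw ..
    _ = homEval ρA ρV ρW lW a P v (ins3 K H Rinv * ins2 K H Rm) := by
      rw [hPr, sw_sw_compl₂_eq_homEval (hA := hA.1)]

end HomEval

theorem hom_quasi_commutative (Rm Rinv : H ⊗[K] H)
    (hR : IsQuasitriangular K H Rm Rinv)
    -- the quasi-commutative H-module algebra A
    (mA : A →ₗ[K] A →ₗ[K] A) (ρA : H →ₗ[K] A →ₗ[K] A)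
    (hAma : IsModuleAlgebra K H mA ρA)
    -- the quasi-commutative left H-module A-bimodules V and W
    (ρV : H →ₗ[K] V →ₗ[K] V) (hV : IsHAction K H ρV)
    (ρW : H →ₗ[K] W →ₗ[K] W)
    (lV rV : A →ₗ[K] V →ₗ[K] V) (lW rW : A →ₗ[K] W →ₗ[K] W)
    -- quasi-commutativity: `v·a = (R̄^α ▷ a)·(R̄_α ▷ v)`
    (hqcV : ∀ (a : A) (v : V), rV a v = sw K H Rinv ρA ρV lV a v)
    (hqcW : ∀ (a : A) (w : W), rW a w = sw K H Rinv ρA ρW lW a w) :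
    ∀ (a : A) (P : V →ₗ[K] W), (∀ (b : A) (v : V), P (rV b v) = rW b (P v)) →
      P ∘ₗ lV a
        = sw K H Rinv ρA (adjHom K H ρW ρV) (LinearMap.llcomp K V W W ∘ₗ lW) a P := by
  intro a P hP
  ext v
  rw [LinearMap.comp_apply,
    apply_lmul_eq_homEval (hRR := hR.inv_mul) (hA := hAma.1) (hV := hV) (hqcV := hqcV)
      (hqcW := hqcW) (hP := hP),
    sw_adjHom_eq_homEval, hR.lTensor_antipode_comul_Rinv]

end TwistPaper
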